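/- Let p be a prime, k a finite field of characteristic p, and let 𝒟 = a_0(z)δ^n + a_1(z)δ^{n−1} + ⋯ + a_n(z) ∈ k[z][δ] (with δ = z·d/dz) be a differential operator with polynomial coefficients of degree deg a_i ≤ d for all i, such that 𝒟 is fuchsian, zero is a regular singular point of 𝒟, and all exponents of 𝒟 at zero are equal to zero. If f ∈ k[[z]] is a nonzero power-series solution of 𝒟 (i.e. Σ_{i=0}^{n} a_i(z)·δ^{n−i}f = 0, where δf = z·f′), then there exist a nonzero polynomial P ∈ k[z] of degree at most pd − 1 and a formal Laurent series c ∈ k((z)) such that f(z) = P(z)·c(z^p). -/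

import Mathlib

/-- Stirling numbers of the second kind, satisfying
`δ^j = ∑_m stirling j m · z^m (d/dz)^m` for `δ = z d/dz`. -/
def stirling : ℕ → ℕ → ℕ
  | 0, 0 => 1
  | 0, _ + 1 => 0
  | _ + 1, 0 => 0
  | n + 1, m + 1 => (m + 1) * stirling n (m + 1) + stirling n m

/-- The Euler operator `δ = z d/dz` on formal power series. -/
noncomputable def deltaPS {R : Type*} [Semiring R] (f : PowerSeries R) : PowerSeries R :=
  PowerSeries.mk fun n => (n : R) * PowerSeries.coeff n f

/-- Substitution of `z^q` for `z` in a formal power series. -/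
noncomputable def expandPS {R : Type*} [Semiring R] (q : ℕ) (f : PowerSeries R) :
    PowerSeries R :=
  PowerSeries.mk fun n => if q ∣ n then PowerSeries.coeff (n / q) f else 0

/-- For `𝒟 = ∑_{i=0}^{n} a i · δ^{n-i}` with polynomial coefficients, the coefficient of
`(d/dz)^{n-i}` in the associated monic operator `L = (1/(z^n a 0)) ∑_m g_m (d/dz)^m`, where
`g_m = z^m ∑_j a j · stirling (n-j) m`. -/
noncomputable def monicCoeff {k : Type*} [Field k] (n : ℕ) (a : ℕ → Polynomial k) (i : ℕ) :
    RatFunc k :=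
  algebraMap (Polynomial k) (RatFunc k)
      (Polynomial.X ^ (n - i) *
        ∑ j ∈ Finset.range (n + 1), a j * Polynomial.C ((stirling (n - j) (n - i) : k))) /
    algebraMap (Polynomial k) (RatFunc k) (Polynomial.X ^ n * a 0)

/-!
Write `f = ∑_{r<p} z^r F_r(z^p)` (the `p`-dissection of `f`). In characteristic `p` the Euler
operator acts on `z^r g(z^p)` as multiplication by `r`, so dissecting `𝒟 f = 0` gives a linear
system `N F = 0` over `k[[z]]` whose matrix `N` has polynomial entries with
`p · deg N_{ur} + u ≤ d + r`. Modulo `z` the matrix `N` is lower triangular with diagonal entries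
`a_0(0) u^n`, so the `(0,0)` cofactor `W_0` of `N` is a unit of `k[[z]]`. Cramer's rule then gives
`F_r = W_r F_0 / W_0`, where `W_r` is the `(r,0)` cofactor, hence `f = P(z) c(z^p)` with
`P = ∑ z^r W_r(z^p)` and `c = F_0 / W_0`; the degree bound on the entries of `N` propagates to
`deg P ≤ (p - 1) d`.
-/

open scoped Polynomial PowerSeries Matrix

theorem Fin.val_sub_add_val {p : ℕ} (u r : Fin p) :
    ((u - r : Fin p) : ℕ) + r = u + if u < r then p else 0 := by
  split_ifs with h
  · rw [Fin.coe_sub_iff_lt.mpr h]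
    omega
  · rw [Fin.coe_sub_iff_le.mpr (not_lt.mp h)]
    omega

namespace PowerSeries

variable {R : Type*} [CommRing R] {p : ℕ}

@[simp] theorem coeff_expandPS (f : R⟦X⟧) (m : ℕ) :
    coeff m (expandPS p f) = if p ∣ m then coeff (m / p) f else 0 :=
  coeff_mk _ _

theorem expandPS_eq_expand (hp : p ≠ 0) (f : R⟦X⟧) : expandPS p f = expand p hp f := by
  ext m
  rw [coeff_expandPS, coeff_expand]

noncomputable def dissect (r : Fin p) : R⟦X⟧ →ₗ[R] R⟦X⟧ where
  toFun f := mk fun j => coeff (p * j + r) f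
  map_add' f g := by ext; simp
  map_smul' c f := by ext; simp

@[simp] theorem coeff_dissect (r : Fin p) (f : R⟦X⟧) (j : ℕ) :
    coeff j (dissect r f) = coeff (p * j + r) f := by
  simp [dissect]

noncomputable def assemble (G : Fin p → R⟦X⟧) : R⟦X⟧ :=
  ∑ r : Fin p, X ^ (r : ℕ) * expandPS p (G r)

theorem coeff_X_pow_mul_expandPS (r u : Fin p) (g : R⟦X⟧) (j : ℕ) :
    coeff (p * j + u) (X ^ (r : ℕ) * expandPS p g) = if r = u then coeff j g else 0 := by
  have hp : 0 < p := Fin.pos u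
  rw [coeff_X_pow_mul', coeff_expandPS]
  by_cases hru : r = u
  · subst hru
    rw [if_pos (Nat.le_add_left _ _), Nat.add_sub_cancel, if_pos (dvd_mul_right p j),
      Nat.mul_div_cancel_left _ hp, if_pos rfl]
  · rw [if_neg hru]
    split_ifs with hle hdvd
    · obtain ⟨t, ht⟩ := hdvd
      have hmod : (u + p * j) % p = (r + p * t) % p := by congr 1; omega
      rw [Nat.add_mul_mod_self_left, Nat.add_mul_mod_self_left, Nat.mod_eq_of_lt u.isLt,
        Nat.mod_eq_of_lt r.isLt] at hmod
      exact absurd (Fin.ext hmod.symm) hru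
    all_goals rfl

theorem dissect_assemble (G : Fin p → R⟦X⟧) (u : Fin p) : dissect u (assemble G) = G u := by
  ext j
  simp [assemble, coeff_X_pow_mul_expandPS]

theorem assemble_dissect [NeZero p] (f : R⟦X⟧) :
    assemble (fun r : Fin p => dissect r f) = f := by
  ext m
  have hm := Nat.div_add_mod m p
  conv_lhs => rw [← hm, ← Fin.val_ofNat p m, assemble, map_sum]
  simp only [coeff_X_pow_mul_expandPS, coeff_dissect]
  simp [hm]

theorem X_pow_val_sub_mul_X_pow_val [NeZero p] (u r : Fin p) :
    (X : R⟦X⟧) ^ ((u - r : Fin p) : ℕ) * X ^ (r : ℕ) =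
      X ^ (u : ℕ) * expandPS p (X ^ if u < r then 1 else 0) := by
  rw [expandPS_eq_expand (NeZero.ne p), map_pow, expand_X, ← pow_mul, ← pow_add, ← pow_add,
    Fin.val_sub_add_val]
  split_ifs <;> simp

theorem assemble_mul [NeZero p] (G H : Fin p → R⟦X⟧) :
    assemble G * assemble H =
      assemble fun u => ∑ r, X ^ (if u < r then 1 else 0) * (G (u - r) * H r) := by
  have hE := expandPS_eq_expand (R := R) (NeZero.ne p)
  calc assemble G * assemble H
      = ∑ r : Fin p, ∑ s : Fin p, X ^ (s : ℕ) * X ^ (r : ℕ) * expandPS p (G s * H r) := by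
        rw [assemble, assemble, Finset.sum_mul_sum, Finset.sum_comm]
        simp only [hE, map_mul]
        exact Finset.sum_congr rfl fun r _ => Finset.sum_congr rfl fun s _ => by ring
    _ = ∑ r : Fin p, ∑ u : Fin p,
          X ^ ((u - r : Fin p) : ℕ) * X ^ (r : ℕ) * expandPS p (G (u - r) * H r) :=
        Finset.sum_congr rfl fun r _ =>
          ((Equiv.subRight r).sum_comp fun s : Fin p => X ^ (s : ℕ) * X ^ (r : ℕ) *
            expandPS p (G s * H r)).symm
    _ = _ := by
        rw [assemble, Finset.sum_comm]
        simp only [X_pow_val_sub_mul_X_pow_val, hE, map_sum, map_mul, Finset.mul_sum]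
        exact Finset.sum_congr rfl fun u _ => Finset.sum_congr rfl fun r _ => by ring

theorem dissect_mul [NeZero p] (u : Fin p) (g h : R⟦X⟧) :
    dissect u (g * h) =
      ∑ r, X ^ (if u < r then 1 else 0) * (dissect (u - r) g * dissect r h) := by
  conv_lhs => rw [← assemble_dissect (p := p) g, ← assemble_dissect (p := p) h, assemble_mul,
    dissect_assemble]

theorem assemble_mul_expandPS [NeZero p] (G : Fin p → R⟦X⟧) (c : R⟦X⟧) :
    assemble (fun r => G r * c) = assemble G * expandPS p c := by
  simp only [assemble, expandPS_eq_expand (NeZero.ne p), map_mul, Finset.sum_mul, mul_assoc]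

theorem constantCoeff_assemble [NeZero p] (G : Fin p → R⟦X⟧) :
    constantCoeff (assemble G) = constantCoeff (G 0) := by
  simpa using congr(coeff 0 $(dissect_assemble G 0))

theorem dissect_deltaPS [CharP R p] (r : Fin p) (f : R⟦X⟧) :
    dissect r (deltaPS f) = (r : R) • dissect r f := by
  ext j
  simp [deltaPS]

theorem dissect_iterate_deltaPS [CharP R p] (m : ℕ) (r : Fin p) (f : R⟦X⟧) :
    dissect r (deltaPS^[m] f) = (r : R) ^ m • dissect r f := by
  induction m with
  | zero => simp
  | succ m ih => rw [Function.iterate_succ_apply', dissect_deltaPS, ih, smul_smul, pow_succ']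

end PowerSeries

namespace Polynomial

theorem exists_natDegree_sum_le {R ι : Type*} [Semiring R] {s : Finset ι} {f : ι → R[X]}
    (h : ∑ i ∈ s, f i ≠ 0) :
    ∃ i ∈ s, f i ≠ 0 ∧ (∑ i ∈ s, f i).natDegree ≤ (f i).natDegree := by
  have hlead : (∑ i ∈ s, f i).coeff (∑ i ∈ s, f i).natDegree ≠ 0 :=
    mt leadingCoeff_eq_zero.mp h
  rw [finsetSum_coeff] at hlead
  obtain ⟨i, hi, hne⟩ := Finset.exists_ne_zero_of_sum_ne_zero hlead
  exact ⟨i, hi, fun h0 => hne (by rw [h0, coeff_zero]), le_natDegree_of_ne_zero hne⟩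

theorem mul_natDegree_prod_add_sum_le {R ι : Type*} [CommSemiring R] (s : Finset ι)
    {M : ι → ι → R[X]}
    {σ : ι → ι} {w : ι → ℕ} {q d : ℕ}
    (hM : ∀ u r, M u r ≠ 0 → q * (M u r).natDegree + w u ≤ d + w r)
    (h : ∏ i ∈ s, M (σ i) i ≠ 0) :
    q * (∏ i ∈ s, M (σ i) i).natDegree + ∑ i ∈ s, w (σ i) ≤
      s.card * d + ∑ i ∈ s, w i := by
  have hfac : ∀ i ∈ s, M (σ i) i ≠ 0 := fun i hi h0 => h (Finset.prod_eq_zero hi h0)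
  calc q * (∏ i ∈ s, M (σ i) i).natDegree + ∑ i ∈ s, w (σ i)
      ≤ ∑ i ∈ s, (q * (M (σ i) i).natDegree + w (σ i)) := by
        rw [Finset.sum_add_distrib, ← Finset.mul_sum]
        gcongr
        exact natDegree_prod_le _ _
    _ ≤ ∑ i ∈ s, (d + w i) := Finset.sum_le_sum fun i hi => hM _ _ (hfac i hi)
    _ = s.card * d + ∑ i ∈ s, w i := by
        rw [Finset.sum_add_distrib, Finset.sum_const, smul_eq_mul]

variable {R : Type*} [CommRing R] {p : ℕ}

noncomputable def dissect (r : Fin p) (a : R[X]) : R[X] :=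
  ∑ j ∈ Finset.range (a.natDegree + 1), monomial j (a.coeff (p * j + r))

theorem coeff_dissect (r : Fin p) (a : R[X]) (j : ℕ) :
    (dissect r a).coeff j = a.coeff (p * j + r) := by
  simp only [dissect, finsetSum_coeff, coeff_monomial, Finset.sum_ite_eq', Finset.mem_range]
  split_ifs with h
  · rfl
  · have : j ≤ p * j := Nat.le_mul_of_pos_left j (Fin.pos r)
    exact (coeff_eq_zero_of_natDegree_lt (by omega)).symm

theorem coe_dissect (r : Fin p) (a : R[X]) :
    ((dissect r a : R[X]) : R⟦X⟧) = PowerSeries.dissect r (a : R⟦X⟧) := by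
  ext j
  simp [coeff_dissect]

theorem mul_natDegree_dissect_add_le {r : Fin p} {a : R[X]} (h : dissect r a ≠ 0) :
    p * (dissect r a).natDegree + r ≤ a.natDegree :=
  le_natDegree_of_ne_zero ((coeff_dissect r a _).symm.trans_ne (mt leadingCoeff_eq_zero.mp h))

theorem coe_expand_eq_expandPS [NeZero p] (a : R[X]) :
    ((expand R p a : R[X]) : R⟦X⟧) = expandPS p a := by
  ext m
  simp [coeff_expand (Nat.pos_of_neZero p)]

theorem coe_sum_X_pow_mul_expand [NeZero p] (G : Fin p → R[X]) :
    ((∑ r : Fin p, X ^ (r : ℕ) * expand R p (G r) : R[X]) : R⟦X⟧) =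
      PowerSeries.assemble fun r => (G r : R⟦X⟧) := by
  simp only [← coeToPowerSeries.ringHom_apply, map_sum, map_mul, map_pow]
  simp [coeToPowerSeries.ringHom_apply, coe_expand_eq_expandPS, PowerSeries.assemble]

end Polynomial

namespace Matrix

open Polynomial

variable {R : Type*} [CommRing R] {ι : Type*} [Fintype ι] [DecidableEq ι]

theorem adjugate_apply_self_mul_eq_of_mulVec_eq_zero {M : Matrix ι ι R} {x : ι → R}
    (hx : M *ᵥ x = 0) {i : ι} (hi : M.adjugate i i ∈ nonZeroDivisors R) (r : ι) :
    M.adjugate i i * x r = M.adjugate r i * x i := by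
  set T := M.updateRow i (Pi.single i 1)
  set v : ι → R := fun r => M.adjugate i i * x r - M.adjugate r i * x i
  have hTv : T *ᵥ v = 0 := by
    ext u
    by_cases hu : u = i
    · subst hu
      simp [T, v, mulVec, dotProduct, Pi.single_apply, mul_comm]
    · have hMadj := congr_fun (congr_fun (mul_adjugate M) u) i
      rw [smul_apply, one_apply_ne hu, smul_zero, mul_apply] at hMadj
      have hMx := congr_fun hx u
      simp only [mulVec, dotProduct, Pi.zero_apply] at hMx
      calc (T *ᵥ v) u
          = M.adjugate i i * ∑ j, M u j * x j - (∑ j, M u j * M.adjugate j i) * x i := by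
            simp only [T, v, mulVec, dotProduct, updateRow_ne hu, mul_sub, Finset.sum_sub_distrib,
              Finset.mul_sum, Finset.sum_mul]
            congr 1 <;> exact Finset.sum_congr rfl fun j _ => by ring
        _ = 0 := by rw [hMx, hMadj, mul_zero, zero_mul, sub_zero]
  have hv : v = 0 := mulVec_injective_of_det_mem_nonZeroDivisors
    (by rwa [← adjugate_apply M i i]) (hTv.trans (mulVec_zero T).symm)
  exact sub_eq_zero.mp (congr_fun hv r)

theorem adjugate_apply_self_of_isLowerTriangular [LinearOrder ι] {A : Matrix ι ι R}
    (hA : A.IsLowerTriangular) (i : ι) :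
    A.adjugate i i = ∏ u ∈ Finset.univ.erase i, A u u := by
  have hT : (A.updateRow i (Pi.single i 1)).IsLowerTriangular := by
    intro u r hur
    by_cases hu : u = i
    · subst hu
      simp only [updateRow_self, Pi.single_apply, ite_eq_right_iff]
      rintro rfl
      exact absurd hur (lt_irrefl _)
    · rw [updateRow_ne hu]
      exact hA hur
  rw [adjugate_apply, det_of_isLowerTriangular _ hT,
    ← Finset.mul_prod_erase _ _ (Finset.mem_univ i)]
  simp only [updateRow_self, Pi.single_eq_same, one_mul]
  exact Finset.prod_congr rfl fun u hu => by rw [updateRow_ne (Finset.ne_of_mem_erase hu)]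

theorem mul_natDegree_adjugate_add_le {M : Matrix ι ι R[X]} {w : ι → ℕ} {q d : ℕ}
    (hM : ∀ u r, M u r ≠ 0 → q * (M u r).natDegree + w u ≤ d + w r) {r j : ι}
    (h : M.adjugate r j ≠ 0) :
    q * (M.adjugate r j).natDegree + w r ≤ (Fintype.card ι - 1) * d + w j := by
  rw [adjugate_apply, det_apply] at h ⊢
  set U := M.updateRow j (Pi.single r 1) with hU
  obtain ⟨σ, -, hσ, hdeg⟩ := exists_natDegree_sum_le h
  have hprod : ∏ i, U (σ i) i ≠ 0 := fun h0 => hσ (by rw [h0, smul_zero])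
  have hσr : σ r = j := by
    by_contra hne
    refine hprod (Finset.prod_eq_zero (Finset.mem_univ (σ.symm j)) ?_)
    rw [Equiv.apply_symm_apply, hU, updateRow_self, Pi.single_eq_of_ne]
    rintro rfl
    exact hne (Equiv.apply_symm_apply σ j)
  have hrest : ∏ i, U (σ i) i = ∏ i ∈ Finset.univ.erase r, M (σ i) i := by
    rw [← Finset.mul_prod_erase _ _ (Finset.mem_univ r), hσr, hU, updateRow_self,
      Pi.single_eq_same, one_mul]
    exact Finset.prod_congr rfl fun i hi => by
      rw [updateRow_ne fun h => Finset.ne_of_mem_erase hi (σ.injective (h.trans hσr.symm))]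
  have hbound := mul_natDegree_prod_add_sum_le _ hM (hrest ▸ hprod)
  have hsumσ := Finset.add_sum_erase Finset.univ (fun i => w (σ i)) (Finset.mem_univ r)
  have hsum := Finset.add_sum_erase Finset.univ w (Finset.mem_univ r)
  rw [Equiv.sum_comp σ w, hσr] at hsumσ
  rw [Finset.card_erase_of_mem (Finset.mem_univ r), Finset.card_univ] at hbound
  have hsmul : (∑ σ : Equiv.Perm ι, Equiv.Perm.sign σ • ∏ i, U (σ i) i).natDegree ≤
      (∏ i, U (σ i) i).natDegree := by
    refine hdeg.trans ?_
    rw [Units.smul_def]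
    exact natDegree_smul_le _ _
  rw [hrest] at hsmul
  have := Nat.mul_le_mul_left q hsmul
  omega

end Matrix

section DissectMatrix

open Polynomial

variable {R : Type*} [CommRing R] {p : ℕ}

/-- Entry `(u, r)`: the `u`-th dissection component of `a_i · δ^{n-i} g` pairs the `(u - r)`-th
component of `a_i` with `r^{n-i}` times the `r`-th component of `g`, with a carry `z` when
`u < r`. -/
noncomputable def dissectMatrix (p n : ℕ) (a : ℕ → R[X]) : Matrix (Fin p) (Fin p) R[X] :=
  Matrix.of fun u r => X ^ (if u < r then 1 else 0) *
    ∑ i ∈ Finset.range (n + 1), C ((r : R) ^ (n - i)) * dissect (u - r) (a i)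

theorem dissectMatrix_map_mulVec_dissect [NeZero p] [CharP R p] (n : ℕ) (a : ℕ → R[X])
    (f : R⟦X⟧) :
    (dissectMatrix p n a).map coeToPowerSeries.ringHom *ᵥ (fun r => PowerSeries.dissect r f) =
      fun u => PowerSeries.dissect u
        (∑ i ∈ Finset.range (n + 1), (a i : R⟦X⟧) * deltaPS^[n - i] f) := by
  ext u : 1
  simp only [Matrix.mulVec, dotProduct, Matrix.map_apply, dissectMatrix, Matrix.of_apply,
    map_mul, map_pow, map_sum, coeToPowerSeries.ringHom_apply, coe_X, coe_C, coe_dissect,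
    PowerSeries.dissect_mul, PowerSeries.dissect_iterate_deltaPS, Finset.mul_sum, Finset.sum_mul]
  rw [Finset.sum_comm]
  refine Finset.sum_congr rfl fun i _ => Finset.sum_congr rfl fun r _ => ?_
  rw [PowerSeries.smul_eq_C_mul, map_pow]
  ring

theorem mul_natDegree_dissectMatrix_add_le {n d : ℕ} {a : ℕ → R[X]}
    (hdeg : ∀ i ≤ n, (a i).natDegree ≤ d) {u r : Fin p} (h : dissectMatrix p n a u r ≠ 0) :
    p * (dissectMatrix p n a u r).natDegree + u ≤ d + r := by
  set S := ∑ i ∈ Finset.range (n + 1), C ((r : R) ^ (n - i)) * dissect (u - r) (a i)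
  have hentry : dissectMatrix p n a u r = X ^ (if u < r then 1 else 0) * S := rfl
  have hS : S ≠ 0 := fun h0 => h (by rw [hentry, h0, mul_zero])
  obtain ⟨i, hi, hterm, hdegS⟩ := exists_natDegree_sum_le hS
  have hdissect : dissect (u - r) (a i) ≠ 0 := fun h0 => hterm (by rw [h0, mul_zero])
  have hdegS' : S.natDegree ≤ (dissect (u - r) (a i)).natDegree :=
    hdegS.trans (natDegree_C_mul_le _ _)
  have hdegM : (dissectMatrix p n a u r).natDegree ≤ (if u < r then 1 else 0) + S.natDegree := by
    rw [hentry]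
    exact natDegree_mul_le.trans (Nat.add_le_add_right (natDegree_X_pow_le _) _)
  have hbound := (mul_natDegree_dissect_add_le hdissect).trans
    (hdeg i (Nat.lt_succ_iff.mp (Finset.mem_range.mp hi)))
  have hcarry := Fin.val_sub_add_val u r
  have h1 := Nat.mul_le_mul_left p hdegM
  have h2 := Nat.mul_le_mul_left p hdegS'
  rw [Nat.mul_add] at h1
  split_ifs at hcarry h1 <;> omega

theorem isLowerTriangular_map_eval_zero_dissectMatrix (n : ℕ) (a : ℕ → R[X]) :
    ((dissectMatrix p n a).map (evalRingHom 0)).IsLowerTriangular := by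
  intro u r (hur : u < r)
  simp [dissectMatrix, hur]

theorem eval_zero_dissectMatrix_apply_self {n : ℕ} {a : ℕ → R[X]}
    (h0 : ∀ i, 1 ≤ i → i ≤ n → (a i).eval 0 = 0) (u : Fin p) :
    (dissectMatrix p n a u u).eval 0 = (u : R) ^ n * (a 0).eval 0 := by
  have heval : ∀ b : R[X], (dissect (u - u) b).eval 0 = b.eval 0 := fun b => by
    rw [← coeff_zero_eq_eval_zero, ← coeff_zero_eq_eval_zero, coeff_dissect,
      Fin.coe_sub_iff_le.mpr le_rfl, Nat.sub_self, mul_zero]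
  simp only [dissectMatrix, Matrix.of_apply, lt_irrefl, if_false, pow_zero, one_mul,
    eval_finsetSum, eval_mul, eval_C, heval]
  rw [Finset.sum_eq_single_of_mem 0 (by simp), Nat.sub_zero]
  intro i hi hi0
  rw [h0 i (Nat.one_le_iff_ne_zero.mpr hi0) (Nat.lt_succ_iff.mp (Finset.mem_range.mp hi)),
    mul_zero]

theorem coeff_zero_adjugate_dissectMatrix_ne_zero [IsDomain R] [NeZero p] [CharP R p] {n : ℕ}
    {a : ℕ → R[X]} (h00 : (a 0).eval 0 ≠ 0)
    (h0 : ∀ i, 1 ≤ i → i ≤ n → (a i).eval 0 = 0) :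
    ((dissectMatrix p n a).adjugate 0 0).coeff 0 ≠ 0 := by
  rw [coeff_zero_eq_eval_zero, ← coe_evalRingHom, ← Matrix.map_apply (f := evalRingHom 0),
    ← RingHom.mapMatrix_apply, RingHom.map_adjugate, RingHom.mapMatrix_apply,
    Matrix.adjugate_apply_self_of_isLowerTriangular
      (isLowerTriangular_map_eval_zero_dissectMatrix n a)]
  refine Finset.prod_ne_zero_iff.mpr fun u hu => ?_
  rw [Matrix.map_apply, coe_evalRingHom, eval_zero_dissectMatrix_apply_self h0]
  refine mul_ne_zero (pow_ne_zero _ fun hu0 => Finset.ne_of_mem_erase hu ?_) h00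
  rw [CharP.cast_eq_zero_iff R p] at hu0
  exact Fin.ext (Nat.eq_zero_of_dvd_of_lt hu0 u.isLt)

theorem natDegree_X_pow_mul_expand_adjugate_dissectMatrix_le [NeZero p] {n d : ℕ}
    {a : ℕ → R[X]} (hdeg : ∀ i ≤ n, (a i).natDegree ≤ d) (r : Fin p) :
    (X ^ (r : ℕ) * expand R p ((dissectMatrix p n a).adjugate r 0)).natDegree ≤ p * d - 1 := by
  by_cases h : (dissectMatrix p n a).adjugate r 0 = 0
  · simp [h]
  have hadj := Matrix.mul_natDegree_adjugate_add_le (M := dissectMatrix p n a)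
    (fun _ _ => mul_natDegree_dissectMatrix_add_le hdeg) h
  rw [Fintype.card_fin, Fin.val_zero, add_zero] at hadj
  have hd : (p - 1) * d ≤ p * d - 1 := by
    rcases Nat.eq_zero_or_pos d with rfl | hd
    · simp
    · rw [Nat.sub_mul, one_mul]
      exact Nat.sub_le_sub_left hd _
  calc (X ^ (r : ℕ) * expand R p ((dissectMatrix p n a).adjugate r 0)).natDegree
      ≤ r + ((dissectMatrix p n a).adjugate r 0).natDegree * p := by
        refine natDegree_mul_le.trans (Nat.add_le_add (natDegree_X_pow_le _) ?_)
        rw [natDegree_expand]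
    _ ≤ p * d - 1 := by rw [Nat.mul_comm _ p]; omega

theorem adjugate_dissectMatrix_mul_dissect [IsDomain R] [NeZero p] [CharP R p] {n : ℕ}
    {a : ℕ → R[X]} (h00 : (a 0).eval 0 ≠ 0)
    (h0 : ∀ i, 1 ≤ i → i ≤ n → (a i).eval 0 = 0)
    {f : R⟦X⟧} (hsol : ∑ i ∈ Finset.range (n + 1), (a i : R⟦X⟧) * deltaPS^[n - i] f = 0)
    (r : Fin p) :
    ((dissectMatrix p n a).adjugate 0 0 : R⟦X⟧) * PowerSeries.dissect r f =
      ((dissectMatrix p n a).adjugate r 0 : R⟦X⟧) * PowerSeries.dissect (0 : Fin p) f := by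
  have hadj : ∀ r, ((dissectMatrix p n a).map coeToPowerSeries.ringHom).adjugate r 0 =
      ((dissectMatrix p n a).adjugate r 0 : R⟦X⟧) := fun r => by
    rw [← RingHom.mapMatrix_apply, ← RingHom.map_adjugate]
    rfl
  have hsystem : (dissectMatrix p n a).map coeToPowerSeries.ringHom *ᵥ
      (fun r => PowerSeries.dissect r f) = 0 :=
    (dissectMatrix_map_mulVec_dissect n a f).trans (by rw [hsol]; ext u : 1; exact map_zero _)
  have hW0 : ((dissectMatrix p n a).map coeToPowerSeries.ringHom).adjugate 0 0 ∈
      nonZeroDivisors R⟦X⟧ := by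
    refine mem_nonZeroDivisors_of_ne_zero fun h => ?_
    rw [hadj, coe_eq_zero_iff] at h
    exact coeff_zero_adjugate_dissectMatrix_ne_zero h00 h0 (by rw [h, coeff_zero])
  simpa only [hadj] using Matrix.adjugate_apply_self_mul_eq_of_mulVec_eq_zero hsystem hW0 r

end DissectMatrix

theorem stmt5_general (p : ℕ) (hp : p.Prime) (k : Type) [Field k] [CharP k p]
    (n d : ℕ) (a : ℕ → Polynomial k)
    (hdeg : ∀ i ≤ n, (a i).natDegree ≤ d)
    -- zero is a regular singular point of 𝒟 with all exponents at zero equal to zero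
    (h00 : (a 0).eval 0 ≠ 0)
    (h0 : ∀ i, 1 ≤ i → i ≤ n → (a i).eval 0 = 0)
    -- f is a nonzero power-series solution of 𝒟
    (f : PowerSeries k)
    (hsol : ∑ i ∈ Finset.range (n + 1), ((a i : PowerSeries k) * deltaPS^[n - i] f) = 0) :
    ∃ P : Polynomial k, P ≠ 0 ∧ P.natDegree ≤ p * d - 1 ∧
      ∃ (c : PowerSeries k) (m : ℕ),
        PowerSeries.X ^ (p * m) * f = (P : PowerSeries k) * expandPS p c := by
  have : NeZero p := ⟨hp.ne_zero⟩
  set N := dissectMatrix p n a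
  set W : Fin p → k⟦X⟧ := fun r => (N.adjugate r 0 : k⟦X⟧)
  have hW0 : PowerSeries.constantCoeff (W 0) ≠ 0 := by
    simpa [W] using coeff_zero_adjugate_dissectMatrix_ne_zero h00 h0
  have hP := Polynomial.coe_sum_X_pow_mul_expand fun r => N.adjugate r 0
  refine ⟨∑ r : Fin p, Polynomial.X ^ (r : ℕ) * Polynomial.expand k p (N.adjugate r 0),
    fun hP0 => hW0 ?_, Polynomial.natDegree_sum_le_of_forall_le _ _ fun r _ =>
      natDegree_X_pow_mul_expand_adjugate_dissectMatrix_le hdeg r,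
    PowerSeries.dissect (0 : Fin p) f * (W 0)⁻¹, 0, ?_⟩
  · rw [← PowerSeries.constantCoeff_assemble, ← hP, hP0, Polynomial.coe_zero, map_zero]
  · rw [mul_zero, pow_zero, one_mul, hP, ← PowerSeries.assemble_mul_expandPS]
    conv_lhs => rw [← PowerSeries.assemble_dissect (p := p) f]
    congr 1
    funext r
    linear_combination (W 0)⁻¹ * adjugate_dissectMatrix_mul_dissect h00 h0 hsol r -
      PowerSeries.dissect r f * PowerSeries.mul_inv_cancel (W 0) hW0

/-- Let `k` be a finite field of characteristic `p` and
`𝒟 = a 0 · δ^n + a 1 · δ^{n-1} + ⋯ + a n ∈ k[z][δ]` with `deg (a i) ≤ d`, such that `𝒟` is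
fuchsian, zero is a regular singular point of `𝒟` and all exponents of `𝒟` at zero equal
zero (equivalently `a 0 (0) ≠ 0` and `a i (0) = 0` for `1 ≤ i ≤ n`).  If `f ∈ k[[z]]` is a
nonzero solution of `𝒟`, then `f(z) = P(z) · c(z^p)` for some nonzero polynomial `P` of
degree at most `p d − 1` and some `c ∈ k((z))` (written `c = z^{-m} c'` with `c' ∈ k[[z]]`). -/
theorem stmt5 (p : ℕ) (hp : p.Prime) (k : Type) [Field k] [Fintype k] [CharP k p]
    (n d : ℕ) (a : ℕ → Polynomial k)
    (hdeg : ∀ i ≤ n, (a i).natDegree ≤ d)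
    -- zero is a regular singular point of 𝒟 with all exponents at zero equal to zero
    (h00 : (a 0).eval 0 ≠ 0)
    (h0 : ∀ i, 1 ≤ i → i ≤ n → (a i).eval 0 = 0)
    -- 𝒟 is fuchsian: infinity is a regular singular point of the monic form …
    (hinfty : ∀ i, 1 ≤ i → i ≤ n →
      (RatFunc.num (monicCoeff n a i)).degree + (i : WithBot ℕ) ≤
        (RatFunc.denom (monicCoeff n a i)).degree)
    -- … and every finite singular point (in the algebraic closure) is regular singular
    (hreg : ∀ α : AlgebraicClosure k,
      (∃ i, 1 ≤ i ∧ i ≤ n ∧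
        Polynomial.eval α
          ((RatFunc.denom (monicCoeff n a i)).map (algebraMap k (AlgebraicClosure k))) = 0) →
      ∀ i, 1 ≤ i → i ≤ n →
        ¬ ((Polynomial.X - Polynomial.C α) ^ (i + 1) ∣
            (RatFunc.denom (monicCoeff n a i)).map (algebraMap k (AlgebraicClosure k))))
    -- f is a nonzero power-series solution of 𝒟
    (f : PowerSeries k) (hf : f ≠ 0)
    (hsol : ∑ i ∈ Finset.range (n + 1), ((a i : PowerSeries k) * deltaPS^[n - i] f) = 0) :
    ∃ P : Polynomial k, P ≠ 0 ∧ P.natDegree ≤ p * d - 1 ∧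
      ∃ (c : PowerSeries k) (m : ℕ),
        PowerSeries.X ^ (p * m) * f = (P : PowerSeries k) * expandPS p c :=
  stmt5_general p hp k n d a hdeg h00 h0 f hsol
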